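/- Let n ≥ 3 and let êᵢ := e_i − (1/n) • ∑ₖ e_k ∈ ℝⁿ. There exists a family of vectors a : Fin n → ℝⁿ such that: each a i lies in H₀ (its coordinates sum to 0); ∑ᵢ a i = 0; the vectors a i span H₀; and {x ∈ H₀ : ∀ i ≠ j, ⟨a i − a j, x⟩ ≤ 1} = ∑_{i ∈ Fin n} segment ℝ êᵢ ê_{i+1}, where i + 1 is taken mod n and the sum on the right is the Minkowski (pointwise) sum of the segments [êᵢ, ê_{i+1}]. -/

import Mathlib

open scoped Pointwise RealInnerProductSpace

def H0 (n : ℕ) : Submodule ℝ (EuclideanSpace ℝ (Fin n)) where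
  carrier := {x | ∑ i, x i = 0}
  add_mem' := by
    intro a b ha hb
    simp only [Set.mem_setOf_eq] at *
    simp [PiLp.add_apply, Finset.sum_add_distrib, ha, hb]
  zero_mem' := by simp
  smul_mem' := by
    intro c x hx
    simp only [Set.mem_setOf_eq] at *
    simp [PiLp.smul_apply, ← Finset.mul_sum, hx]

theorem mem_H0_iff {n : ℕ} (x : EuclideanSpace ℝ (Fin n)) :
    x ∈ H0 n ↔ ∑ i, x i = 0 := Iff.rfl

noncomputable def ehat (n : ℕ) (i : Fin n) : EuclideanSpace ℝ (Fin n) :=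
  EuclideanSpace.single i (1 : ℝ) - ((1 : ℝ) / n) • ∑ k, EuclideanSpace.single k (1 : ℝ)

theorem ehat_mem_H0 (n : ℕ) (i : Fin n) : ehat n i ∈ H0 n := by
  have hn : (n : ℝ) ≠ 0 := by
    have : 0 < n := i.pos
    positivity
  have hsum : ∀ j : Fin n, (∑ k : Fin n, EuclideanSpace.single k (1:ℝ)) j = 1 := by
    intro j
    simp [WithLp.ofLp_sum, Finset.sum_apply, PiLp.single_apply]
  rw [mem_H0_iff]
  simp only [ehat, PiLp.sub_apply, PiLp.smul_apply, EuclideanSpace.single_apply,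
    Finset.sum_sub_distrib, smul_eq_mul, hsum, mul_one]
  rw [Finset.sum_ite_eq' Finset.univ i fun _ => (1 : ℝ)]
  simp only [Finset.mem_univ, if_true, Finset.sum_const, Finset.card_univ,
    Fintype.card_fin, nsmul_eq_mul]
  field_simp <;> simp

/-- There is a family of vectors `a i` spanning the hyperplane `H₀`, summing to
`0`, such that the polytope `{x ∈ H₀ : ⟪a i - a j, x⟫ ≤ 1 for all i ≠ j}`
(the polar in `H₀` of the root polytope of `{a i}`) is the Minkowski sum of the
segments `[êᵢ, ê_{i+1}]`, `i ∈ Fin n` (indices mod `n`). -/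
theorem exists_roots_polar_eq_segment_sum (n : ℕ) (hn : 3 ≤ n) :
    ∃ a : Fin n → EuclideanSpace ℝ (Fin n),
      (∀ i, ∑ k, a i k = 0) ∧
      (∑ i, a i = 0) ∧
      Submodule.span ℝ (Set.range a) = H0 n ∧
      {x : EuclideanSpace ℝ (Fin n) | (∑ k, x k) = 0 ∧
          ∀ i j : Fin n, i ≠ j → ⟪a i - a j, x⟫ ≤ 1} =
        ∑ i : Fin n, segment ℝ (ehat n i) (ehat n (i + (⟨1, by omega⟩ : Fin n))) := by
  classical
  haveI : NeZero n := ⟨by omega⟩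
  have hnR : (n : ℝ) ≠ 0 := Nat.cast_ne_zero.mpr (by omega)
  have hv1 : ((1 : Fin n) : ℕ) = 1 := by
    rw [Fin.val_one']; exact Nat.mod_eq_of_lt (by omega)
  have hvadd : ∀ a b : Fin n, ((a + b : Fin n) : ℕ) = ((a : ℕ) + (b : ℕ)) % n := Fin.val_add
  have hvsub : ∀ a b : Fin n, ((a - b : Fin n) : ℕ) = (n - (b : ℕ) + (a : ℕ)) % n :=
    fun a b => by rw [Fin.sub_def]
  have h1 : (⟨1, by omega⟩ : Fin n) = 1 := by
    apply Fin.ext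
    rw [hv1]
  -- coordinates of ehat
  have hehat : ∀ i k : Fin n, ehat n i k = (if k = i then 1 else 0) - 1 / n := by
    intro i k
    have hs : (∑ j : Fin n, EuclideanSpace.single j (1 : ℝ)) k = 1 := by
      rw [WithLp.ofLp_sum, Finset.sum_apply]
      simp [EuclideanSpace.single_apply]
    simp only [ehat, PiLp.sub_apply, PiLp.smul_apply, hs, smul_eq_mul, mul_one,
      EuclideanSpace.single_apply]
  -- the vectors c i
  set c : Fin n → EuclideanSpace ℝ (Fin n) := fun i =>
    (WithLp.equiv 2 (Fin n → ℝ)).symm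
      (fun k => (if k < i then 1 else 0) - ((i : ℕ) : ℝ) / n) with hcdef
  have hc : ∀ i k : Fin n, c i k = (if k < i then 1 else 0) - ((i : ℕ) : ℝ) / n :=
    fun i k => rfl
  have hones : ∀ i : Fin n, ∑ k : Fin n, (if k < i then (1 : ℝ) else 0) = (i : ℕ) := by
    intro i
    simp only [Fin.lt_def]
    rw [Fin.sum_univ_eq_sum_range (fun k => if k < (i : ℕ) then (1 : ℝ) else 0)]
    rw [← Finset.sum_subset (Finset.range_subset_range.mpr i.isLt.le)
        (fun x _ hx => by simp only [Finset.mem_range] at hx ⊢; rw [if_neg (by omega)])]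
    rw [Finset.sum_ite_of_true (by intro k hk; simpa using hk)]
    simp
  have hcsum : ∀ i, ∑ k, c i k = 0 := by
    intro i
    simp only [hc]
    rw [Finset.sum_sub_distrib, hones i]
    simp only [Finset.sum_const, Finset.card_univ, Fintype.card_fin, nsmul_eq_mul]
    field_simp
    simp
  set a : Fin n → EuclideanSpace ℝ (Fin n) :=
    fun i => c i - ((1 : ℝ) / n) • ∑ j, c j with hadef
  have hmk : ∀ k : Fin n, (∑ j, c j) k = ∑ j, c j k := fun k => by
    rw [WithLp.ofLp_sum, Finset.sum_apply]
  have ha : ∀ i k : Fin n, a i k = c i k - (1 / n) * ∑ j, c j k := by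
    intro i k
    simp only [hadef, PiLp.sub_apply, PiLp.smul_apply, smul_eq_mul, hmk]
  have hasum : ∀ i, ∑ k, a i k = 0 := by
    intro i
    rw [Finset.sum_congr rfl (fun k _ => ha i k), Finset.sum_sub_distrib, hcsum i]
    rw [← Finset.mul_sum, Finset.sum_comm]
    simp [hcsum]
  have hsuma : ∑ i, a i = 0 := by
    ext k
    rw [WithLp.ofLp_sum, Finset.sum_apply]
    rw [Finset.sum_congr rfl (fun i (_ : i ∈ Finset.univ) => ha i k)]
    rw [Finset.sum_sub_distrib, Finset.sum_const, Finset.card_univ, Fintype.card_fin,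
      nsmul_eq_mul]
    have hz : (0 : EuclideanSpace ℝ (Fin n)) k = 0 := rfl
    rw [hz]
    field_simp
    simp
  -- partial sums
  set T : EuclideanSpace ℝ (Fin n) → Fin n → ℝ :=
    fun x i => ∑ k, if k < i then x k else 0 with hTdef
  have hinner : ∀ x : EuclideanSpace ℝ (Fin n), (∑ k, x k) = 0 → ∀ i j : Fin n,
      ⟪a i - a j, x⟫ = T x i - T x j := by
    intro x hx i j
    have happ : ∀ k, (a i - a j) k = ((if k < i then 1 else 0) - (if k < j then 1 else 0))
        - (((i : ℕ) : ℝ) / n - ((j : ℕ) : ℝ) / n) := by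
      intro k
      rw [PiLp.sub_apply, ha i k, ha j k, hc, hc]
      ring
    have hip : ⟪a i - a j, x⟫ = ∑ k, (a i - a j) k * x k := by
      simp [PiLp.inner_apply, RCLike.inner_apply, conj_trivial]
      exact Finset.sum_congr rfl fun k _ => mul_comm _ _
    rw [hip]
    have hterm : ∀ k, (a i - a j) k * x k =
        ((if k < i then x k else 0) - (if k < j then x k else 0))
          - (((i : ℕ) : ℝ) / n - ((j : ℕ) : ℝ) / n) * x k := by
      intro k
      rw [happ k]
      by_cases h2 : k < i <;> by_cases h3 : k < j <;> simp [h2, h3] <;> ring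
    rw [Finset.sum_congr rfl fun k _ => hterm k, Finset.sum_sub_distrib,
      Finset.sum_sub_distrib, ← Finset.mul_sum, hx, mul_zero, sub_zero]
  have hT0 : ∀ x : EuclideanSpace ℝ (Fin n), T x 0 = 0 := by
    intro x
    simp only [hTdef]
    apply Finset.sum_eq_zero
    intro k _
    rw [if_neg]
    rw [Fin.lt_def, Fin.val_zero]
    omega
  have hstep : ∀ (x : EuclideanSpace ℝ (Fin n)) (j : Fin n), (j : ℕ) + 1 < n →
      T x (j + 1) = T x j + x j := by
    intro x j hj
    have hval : ((j + 1 : Fin n) : ℕ) = (j : ℕ) + 1 := by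
      rw [hvadd, hv1]
      exact Nat.mod_eq_of_lt hj
    have hsplit : ∀ k : Fin n, (if k < j + 1 then x k else 0) =
        (if k < j then x k else 0) + (if k = j then x k else 0) := by
      intro k
      simp only [Fin.lt_def, hval, Fin.ext_iff]
      by_cases h : (k : ℕ) = (j : ℕ)
      · rw [if_pos (by omega), if_neg (by omega), if_pos h]; ring
      · by_cases h' : (k : ℕ) < (j : ℕ)
        · rw [if_pos (by omega), if_pos h', if_neg h]; ring
        · rw [if_neg (by omega), if_neg h', if_neg h]; ring
    simp only [hTdef]
    rw [Finset.sum_congr rfl fun k _ => hsplit k, Finset.sum_add_distrib,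
      Finset.sum_ite_eq' Finset.univ j x]
    simp
  have hTstep : ∀ x : EuclideanSpace ℝ (Fin n), (∑ k, x k) = 0 → ∀ j : Fin n,
      T x (j + 1) = T x j + x j := by
    intro x hx j
    by_cases hj : (j : ℕ) + 1 < n
    · exact hstep x j hj
    · have hj' : (j : ℕ) = n - 1 := by have := j.isLt; omega
      have hj1 : j + 1 = 0 := by
        apply Fin.ext
        rw [hvadd, hv1, Fin.val_zero]
        have h9 : (j : ℕ) + 1 = n := by omega
        rw [h9, Nat.mod_self]
      have hTj : T x j = ∑ k, x k - x j := by
        have hterm : ∀ k : Fin n, (if k < j then x k else 0) =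
            x k - (if k = j then x k else 0) := by
          intro k
          by_cases h : k = j
          · subst h; simp [lt_irrefl]
          · have hk : k < j := by
              rw [Fin.lt_def]
              have h8 : (k : ℕ) ≠ (j : ℕ) := fun hh => h (Fin.ext hh)
              have := k.isLt
              omega
            simp [hk, h]
        simp only [hTdef]
        rw [Finset.sum_congr rfl fun k _ => hterm k, Finset.sum_sub_distrib,
          Finset.sum_ite_eq' Finset.univ j x]
        simp
      rw [hj1, hT0 x, hTj, hx]
      ring
  -- coordinates of a point of the Minkowski sum
  have hsumcoord : ∀ (t : Fin n → ℝ) (k : Fin n),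
      (∑ i, ((1 - t i) • ehat n i + t i • ehat n (i + 1))) k = t (k - 1) - t k := by
    intro t k
    rw [WithLp.ofLp_sum, Finset.sum_apply]
    have hterm : ∀ i : Fin n, ((1 - t i) • ehat n i + t i • ehat n (i + 1)) k =
        ((if i = k then 1 else 0) - 1 / n)
          + ((if i = k - 1 then t i else 0) - (if i = k then t i else 0)) := by
      intro i
      have e1 : (k = i + 1) ↔ (i = k - 1) := eq_comm.trans eq_sub_iff_add_eq.symm
      have e2 : (k = i) ↔ (i = k) := eq_comm
      simp only [PiLp.add_apply, PiLp.smul_apply, smul_eq_mul, hehat]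
      rw [if_congr e1 rfl rfl, if_congr e2 rfl rfl]
      by_cases h4 : i = k
      · subst h4
        have hne : ¬ (i = i - 1) := by
          intro hcon
          have h10 : i + 1 = i := eq_sub_iff_add_eq.mp hcon
          have h11 : (1 : Fin n) = 0 := by
            nth_rewrite 2 [← add_zero i] at h10
            exact add_left_cancel h10
          have h12 := congrArg Fin.val h11
          rw [hv1, Fin.val_zero] at h12
          exact one_ne_zero h12
        simp only [hne, if_true, if_false, eq_self_iff_true, if_pos rfl, if_neg hne]
        ring
      · by_cases h3 : i = k - 1
        · rw [if_neg h4, if_pos h3, if_pos h3, if_neg h4]; ring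
        · rw [if_neg h4, if_neg h3, if_neg h3, if_neg h4]; ring
    rw [Finset.sum_congr rfl fun i _ => hterm i, Finset.sum_add_distrib,
      Finset.sum_sub_distrib, Finset.sum_ite_eq' Finset.univ k (fun _ => (1 : ℝ)),
      Finset.sum_sub_distrib, Finset.sum_ite_eq' Finset.univ (k - 1) t,
      Finset.sum_ite_eq' Finset.univ k t]
    simp only [Finset.mem_univ, if_true, Finset.sum_const, Finset.card_univ,
      Fintype.card_fin, nsmul_eq_mul]
    field_simp
    simp
  -- sum of all ehat is zero
  have hEsum : ∑ i, ehat n i = 0 := by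
    ext k
    rw [WithLp.ofLp_sum, Finset.sum_apply]
    rw [Finset.sum_congr rfl (fun i (_ : i ∈ Finset.univ) => hehat i k)]
    rw [Finset.sum_sub_distrib, Finset.sum_ite_eq Finset.univ k (fun _ => (1 : ℝ))]
    simp only [Finset.mem_univ, if_true, Finset.sum_const, Finset.card_univ,
      Fintype.card_fin, nsmul_eq_mul]
    have hz : (0 : EuclideanSpace ℝ (Fin n)) k = 0 := rfl
    rw [hz]
    field_simp
    simp
  -- span
  have span_eq : Submodule.span ℝ (Set.range a) = H0 n := by
    apply le_antisymm
    · rw [Submodule.span_le]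
      rintro _ ⟨i, rfl⟩
      exact (mem_H0_iff _).mpr (hasum i)
    · intro x hx
      rw [mem_H0_iff] at hx
      have hEmem : ∀ i : Fin n, (i : ℕ) + 1 < n →
          ehat n i ∈ Submodule.span ℝ (Set.range a) := by
        intro i hi
        have hval : ((i + 1 : Fin n) : ℕ) = (i : ℕ) + 1 := by
          rw [hvadd, hv1]
          exact Nat.mod_eq_of_lt hi
        have heq : ehat n i = a (i + 1) - a i := by
          ext k
          rw [PiLp.sub_apply, ha (i + 1) k, ha i k, hc, hc, hehat, hval]
          push_cast
          simp only [Fin.lt_def, Fin.ext_iff, hval]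
          by_cases h2 : (k : ℕ) = (i : ℕ)
          · rw [if_pos h2, if_pos (by omega), if_neg (by omega)]; ring
          · by_cases h3 : (k : ℕ) < (i : ℕ)
            · rw [if_neg h2, if_pos (by omega), if_pos h3]; ring
            · rw [if_neg h2, if_neg (by omega), if_neg h3]; ring
        rw [heq]
        exact sub_mem (Submodule.subset_span ⟨i + 1, rfl⟩) (Submodule.subset_span ⟨i, rfl⟩)
      have hEmem' : ∀ i : Fin n, ehat n i ∈ Submodule.span ℝ (Set.range a) := by
        intro i
        by_cases hi : (i : ℕ) + 1 < n
        · exact hEmem i hi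
        · have heq : ehat n i = -∑ j ∈ Finset.univ.erase i, ehat n j := by
            have h5 := hEsum
            rw [← Finset.add_sum_erase Finset.univ _ (Finset.mem_univ i)] at h5
            exact add_eq_zero_iff_eq_neg.mp h5
          rw [heq]
          refine neg_mem (Submodule.sum_mem _ (fun j hj => hEmem j ?_))
          have h6 : j ≠ i := Finset.ne_of_mem_erase hj
          have h7 : (j : ℕ) ≠ (i : ℕ) := fun hh => h6 (Fin.ext hh)
          have := j.isLt
          have := i.isLt
          omega
      have hxdecomp : x = ∑ i, x i • ehat n i := by
        ext k
        rw [WithLp.ofLp_sum, Finset.sum_apply]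
        have hterm : ∀ i : Fin n, (x i • ehat n i) k =
            (if k = i then x i else 0) - x i * (1 / n) := by
          intro i
          rw [PiLp.smul_apply, hehat, smul_eq_mul]
          by_cases h : k = i <;> simp [h] <;> ring
        rw [Finset.sum_congr rfl fun i _ => hterm i, Finset.sum_sub_distrib,
          Finset.sum_ite_eq Finset.univ k x, ← Finset.sum_mul, hx]
        simp
      rw [hxdecomp]
      exact Submodule.sum_mem _ fun i _ => Submodule.smul_mem _ _ (hEmem' i)
  refine ⟨a, hasum, hsuma, span_eq, ?_⟩
  ext x
  simp only [Set.mem_setOf_eq, h1]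
  rw [Set.mem_fintype_sum]
  constructor
  · -- polytope ⊆ Minkowski sum
    rintro ⟨hx, hineq⟩
    have hT1 : ∀ i j : Fin n, T x i - T x j ≤ 1 := by
      intro i j
      by_cases h : i = j
      · subst h; simp
      · rw [← hinner x hx i j]; exact hineq i j h
    obtain ⟨i0, -, hmax⟩ := Finset.exists_max_image Finset.univ (T x) ⟨0, Finset.mem_univ 0⟩
    set t : Fin n → ℝ := fun j => T x i0 - T x (j + 1) with htdef
    have ht0 : ∀ j, 0 ≤ t j := fun j => by
      have := hmax (j + 1) (Finset.mem_univ _)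
      simp only [htdef]
      linarith
    have ht1 : ∀ j, t j ≤ 1 := fun j => hT1 i0 (j + 1)
    have hxt : ∀ k, x k = t (k - 1) - t k := by
      intro k
      have h5 : (k - 1) + 1 = k := sub_add_cancel k 1
      simp only [htdef, h5]
      have := hTstep x hx k
      linarith
    refine ⟨fun i => (1 - t i) • ehat n i + t i • ehat n (i + 1), fun i => ?_, ?_⟩
    · exact ⟨1 - t i, t i, by linarith [ht1 i], ht0 i, by ring, rfl⟩
    · ext k
      exact (hsumcoord t k).trans (hxt k).symm
  · -- Minkowski sum ⊆ polytope
    rintro ⟨g, hg, hgsum⟩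
    choose A B hA hB hAB hgeq using fun i => hg i
    have hgB : ∀ i, g i = (1 - B i) • ehat n i + B i • ehat n (i + 1) := by
      intro i
      rw [← hgeq i]
      have h7 : A i = 1 - B i := by linarith [hAB i]
      rw [h7]
    have hx_coord : ∀ k, x k = B (k - 1) - B k := by
      intro k
      calc x k = (∑ i, g i) k := by rw [hgsum]
        _ = (∑ i, ((1 - B i) • ehat n i + B i • ehat n (i + 1))) k := by
            rw [Finset.sum_congr rfl fun i _ => hgB i]
        _ = B (k - 1) - B k := hsumcoord B k
    have hxsum : ∑ k, x k = 0 := by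
      rw [Finset.sum_congr rfl fun k _ => hx_coord k, Finset.sum_sub_distrib]
      rw [Fintype.sum_equiv (Equiv.subRight (1 : Fin n)) (fun k => B (k - 1)) B
        (fun k => rfl)]
      ring
    refine ⟨hxsum, fun i j hij => ?_⟩
    rw [hinner x hxsum i j]
    obtain ⟨L, hL⟩ : ∃ L : Fin n, (L : ℕ) = n - 1 := ⟨⟨n - 1, by omega⟩, rfl⟩
    have key : ∀ (v : ℕ) (h : v < n), T x ⟨v, h⟩ = B L - B (⟨v, h⟩ - 1) := by
      intro v
      induction v with
      | zero =>
        intro h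
        have h8 : ((⟨0, h⟩ : Fin n) - 1) = L := by
          apply Fin.ext
          rw [hvsub, hv1, hL]
          show (n - 1 + 0) % n = n - 1
          rw [Nat.add_zero]
          exact Nat.mod_eq_of_lt (by omega)
        have h9 : (⟨0, h⟩ : Fin n) = 0 := rfl
        rw [h8, h9, hT0 x]
        ring
      | succ v ih =>
        intro h
        have hv : v < n := by omega
        have heq : (⟨v + 1, h⟩ : Fin n) = ⟨v, hv⟩ + 1 := by
          apply Fin.ext
          rw [hvadd, hv1]
          exact (Nat.mod_eq_of_lt h).symm
        have hsub : ((⟨v, hv⟩ + 1 : Fin n) - 1) = ⟨v, hv⟩ := add_sub_cancel_right _ _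
        rw [heq, hstep x ⟨v, hv⟩ h, ih hv, hx_coord ⟨v, hv⟩, hsub]
        ring
    have hTi : T x i = B L - B (i - 1) := key i.val i.isLt
    have hTj : T x j = B L - B (j - 1) := key j.val j.isLt
    rw [hTi, hTj]
    have hb1 : B (j - 1) ≤ 1 := by linarith [hAB (j - 1), hA (j - 1)]
    have hb0 : 0 ≤ B (i - 1) := hB (i - 1)
    linarith
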